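/- arXiv:1805.07766 — 2 statements merged into one kernel-verified Lean document; each statement's English description precedes it below -/
import Mathlib

section
/- Let μ ∈ ℝ, ν > 0, A > 0, and let θ be the (μ,ν,A)-truncated-Gaussian density with normalizing constant ρ. Then the differential entropy of θ satisfies −∫₀^A θ(x)·log θ(x) dx = (1/2)·log(2πe·ν²) − φ, where φ = log ρ + (1/2)·((A − μ)·θ(A) + μ·θ(0)). -/
open MeasureTheory Real

/-- The Gaussian probability density with mean `μ` and variance `ν²`. -/
noncomputable def gaussPDF (μ ν : ℝ) (x : ℝ) : ℝ :=
  (ν * Real.sqrt (2 * Real.pi))⁻¹ * Real.exp (-(x - μ) ^ 2 / (2 * ν ^ 2))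

/-- The Gaussian cumulative distribution function. -/
noncomputable def gaussCDF (μ ν : ℝ) (x : ℝ) : ℝ :=
  ∫ t in Set.Iic x, gaussPDF μ ν t

/-- The normalizing constant `ρ = (G(A) - G(0))⁻¹` of the truncated Gaussian. -/
noncomputable def tgRho (μ ν A : ℝ) : ℝ := (gaussCDF μ ν A - gaussCDF μ ν 0)⁻¹

/-- The `(μ, ν, A)`-truncated-Gaussian density:
`θ(x) = ρ · g_{μ,ν}(x)` on `[0, A]` and `0` otherwise. -/
noncomputable def tgPDF (μ ν A : ℝ) (x : ℝ) : ℝ :=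
  if x ∈ Set.Icc 0 A then tgRho μ ν A * gaussPDF μ ν x else 0

/-!
On `[0, A]` we have `log θ(x) = log ρ - log (ν √(2π)) - (x - μ)² / (2ν²)`, so the entropy is
an affine combination of `∫₀^A θ = 1` and the truncated second moment `∫₀^A (x - μ)² θ(x) dx`.
Since `(x - μ) g(x) = -ν² g'(x)`, integrating by parts expresses that moment as
`ν² (1 - ((A - μ) θ(A) + μ θ(0)))`, which produces the boundary term of `φ`.
-/

section Gaussian

variable (μ : ℝ) {ν : ℝ}

lemma gaussPDF_pos (hν : 0 < ν) (x : ℝ) : 0 < gaussPDF μ ν x := by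
  unfold gaussPDF
  positivity

@[fun_prop]
lemma continuous_gaussPDF : Continuous (gaussPDF μ ν) := by
  unfold gaussPDF
  fun_prop

lemma gaussPDF_eq_gaussianPDFReal (hν : 0 < ν) :
    gaussPDF μ ν = ProbabilityTheory.gaussianPDFReal μ ⟨ν ^ 2, sq_nonneg ν⟩ := by
  funext x
  simp only [gaussPDF, ProbabilityTheory.gaussianPDFReal]
  congr 2
  change ν * √(2 * π) = √(2 * π * ν ^ 2)
  rw [mul_comm (2 * π), Real.sqrt_mul (sq_nonneg ν), Real.sqrt_sq hν.le]

lemma integrable_gaussPDF (hν : 0 < ν) : Integrable (gaussPDF μ ν) := by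
  rw [gaussPDF_eq_gaussianPDFReal μ hν]
  exact ProbabilityTheory.integrable_gaussianPDFReal μ _

lemma integral_gaussPDF_eq_sub_gaussCDF (hν : 0 < ν) (a b : ℝ) :
    ∫ x in a..b, gaussPDF μ ν x = gaussCDF μ ν b - gaussCDF μ ν a :=
  (intervalIntegral.integral_Iic_sub_Iic (integrable_gaussPDF μ hν).integrableOn
    (integrable_gaussPDF μ hν).integrableOn).symm

lemma hasDerivAt_gaussPDF_mul_neg_sq (hν : ν ≠ 0) (x : ℝ) :
    HasDerivAt (fun y => -ν ^ 2 * gaussPDF μ ν y) ((x - μ) * gaussPDF μ ν x) x := by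
  have hsq : HasDerivAt (fun y : ℝ => (y - μ) ^ 2) (2 * (x - μ)) x := by
    simpa using ((hasDerivAt_id x).sub_const μ).fun_pow 2
  have hexponent : HasDerivAt (fun y : ℝ => -(y - μ) ^ 2 / (2 * ν ^ 2))
      (-(2 * (x - μ)) / (2 * ν ^ 2)) x := hsq.neg.div_const (2 * ν ^ 2)
  refine (hexponent.exp.const_mul _).const_mul (-ν ^ 2) |>.congr_deriv ?_
  unfold gaussPDF
  field_simp

lemma integral_sq_mul_gaussPDF (hν : ν ≠ 0) (a b : ℝ) :
    ∫ x in a..b, (x - μ) ^ 2 * gaussPDF μ ν x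
      = ν ^ 2 * (∫ x in a..b, gaussPDF μ ν x)
        - ν ^ 2 * ((b - μ) * gaussPDF μ ν b - (a - μ) * gaussPDF μ ν a) := by
  calc ∫ x in a..b, (x - μ) ^ 2 * gaussPDF μ ν x
      = ∫ x in a..b, (x - μ) * ((x - μ) * gaussPDF μ ν x) := by
        simp only [← mul_assoc, ← sq]
    _ = (b - μ) * (-ν ^ 2 * gaussPDF μ ν b) - (a - μ) * (-ν ^ 2 * gaussPDF μ ν a)
          - ∫ x in a..b, 1 * (-ν ^ 2 * gaussPDF μ ν x) :=
        intervalIntegral.integral_mul_deriv_eq_deriv_mul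
          (fun x _ => by simpa using (hasDerivAt_id x).sub_const μ)
          (fun x _ => hasDerivAt_gaussPDF_mul_neg_sq μ hν x)
          (continuous_const.intervalIntegrable a b)
          (((continuous_id.sub continuous_const).mul (continuous_gaussPDF μ)).intervalIntegrable
            a b)
    _ = _ := by
        simp only [one_mul, intervalIntegral.integral_const_mul]
        ring

lemma log_gaussPDF (hν : 0 < ν) (x : ℝ) :
    Real.log (gaussPDF μ ν x)
      = -Real.log (ν * Real.sqrt (2 * Real.pi)) - (x - μ) ^ 2 / (2 * ν ^ 2) := by
  unfold gaussPDF
  rw [Real.log_mul (by positivity) (Real.exp_pos _).ne', Real.log_inv, Real.log_exp]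
  ring

lemma integral_const_mul_gaussPDF_mul_log (hν : 0 < ν) {ρ : ℝ} (hρ : 0 < ρ) (a b : ℝ) :
    ∫ x in a..b, ρ * gaussPDF μ ν x * Real.log (ρ * gaussPDF μ ν x)
      = ρ * (Real.log ρ - Real.log (ν * Real.sqrt (2 * Real.pi)) - 1 / 2)
          * (∫ x in a..b, gaussPDF μ ν x)
        + ρ / 2 * ((b - μ) * gaussPDF μ ν b - (a - μ) * gaussPDF μ ν a) := by
  set L := Real.log ρ - Real.log (ν * Real.sqrt (2 * Real.pi))
  have hpointwise : ∀ x, ρ * gaussPDF μ ν x * Real.log (ρ * gaussPDF μ ν x)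
      = ρ * L * gaussPDF μ ν x - ρ / (2 * ν ^ 2) * ((x - μ) ^ 2 * gaussPDF μ ν x) := by
    intro x
    rw [Real.log_mul hρ.ne' (gaussPDF_pos μ hν x).ne', log_gaussPDF μ hν]
    field_simp
    ring
  have hint₁ : IntervalIntegrable (fun x => ρ * L * gaussPDF μ ν x) volume a b :=
    (continuous_const.mul (continuous_gaussPDF μ)).intervalIntegrable a b
  have hint₂ : IntervalIntegrable
      (fun x => ρ / (2 * ν ^ 2) * ((x - μ) ^ 2 * gaussPDF μ ν x)) volume a b := by
    apply Continuous.intervalIntegrable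
    fun_prop
  simp_rw [hpointwise]
  rw [intervalIntegral.integral_sub hint₁ hint₂,
    intervalIntegral.integral_const_mul, intervalIntegral.integral_const_mul,
    integral_sq_mul_gaussPDF μ hν.ne']
  field_simp
  ring

lemma log_mul_sqrt_two_pi_add_half (hν : 0 < ν) :
    Real.log (ν * Real.sqrt (2 * Real.pi)) + 1 / 2
      = 1 / 2 * Real.log (2 * Real.pi * Real.exp 1 * ν ^ 2) := by
  have h2π : (0 : ℝ) < 2 * π := by positivity
  rw [Real.log_mul (x := 2 * π * exp 1) (by positivity) (by positivity),
    Real.log_mul h2π.ne' (exp_pos 1).ne',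
    Real.log_exp, Real.log_pow, Real.log_mul hν.ne' (Real.sqrt_pos.2 h2π).ne',
    Real.log_sqrt h2π.le]
  push_cast
  ring

end Gaussian

section TruncatedGaussian

variable {μ ν A : ℝ}

lemma tgRho_eq_inv_integral (hν : 0 < ν) :
    tgRho μ ν A = (∫ x in (0 : ℝ)..A, gaussPDF μ ν x)⁻¹ := by
  rw [tgRho, integral_gaussPDF_eq_sub_gaussCDF μ hν]

lemma integral_gaussPDF_pos (hν : 0 < ν) (hA : 0 < A) :
    0 < ∫ x in (0 : ℝ)..A, gaussPDF μ ν x :=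
  intervalIntegral.intervalIntegral_pos_of_pos
    ((continuous_gaussPDF μ).intervalIntegrable 0 A) (gaussPDF_pos μ hν) hA

lemma tgRho_pos (hν : 0 < ν) (hA : 0 < A) : 0 < tgRho μ ν A := by
  rw [tgRho_eq_inv_integral hν]
  exact inv_pos.2 (integral_gaussPDF_pos hν hA)

lemma tgRho_mul_integral_gaussPDF (hν : 0 < ν) (hA : 0 < A) :
    tgRho μ ν A * ∫ x in (0 : ℝ)..A, gaussPDF μ ν x = 1 := by
  rw [tgRho_eq_inv_integral hν]
  exact inv_mul_cancel₀ (integral_gaussPDF_pos hν hA).ne'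

lemma tgPDF_of_mem {x : ℝ} (hx : x ∈ Set.Icc 0 A) :
    tgPDF μ ν A x = tgRho μ ν A * gaussPDF μ ν x :=
  if_pos hx

end TruncatedGaussian

/-- The differential entropy of the `(μ, ν, A)`-truncated-Gaussian density `θ` satisfies
`−∫₀^A θ(x)·log θ(x) dx = (1/2)·log(2πe·ν²) − φ`, where
`φ = log ρ + (1/2)·((A − μ)·θ(A) + μ·θ(0))`. -/
theorem tg_entropy (μ ν A : ℝ) (hν : 0 < ν) (hA : 0 < A) :
    -∫ x in (0:ℝ)..A, tgPDF μ ν A x * Real.log (tgPDF μ ν A x)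
      = (1 / 2) * Real.log (2 * Real.pi * Real.exp 1 * ν ^ 2)
        - (Real.log (tgRho μ ν A)
            + (1 / 2) * ((A - μ) * tgPDF μ ν A A + μ * tgPDF μ ν A 0)) := by
  have hθ : ∫ x in (0:ℝ)..A, tgPDF μ ν A x * Real.log (tgPDF μ ν A x)
      = ∫ x in (0:ℝ)..A, tgRho μ ν A * gaussPDF μ ν x
          * Real.log (tgRho μ ν A * gaussPDF μ ν x) := by
    refine intervalIntegral.integral_congr fun x hx => ?_
    rw [Set.uIcc_of_le hA.le] at hx
    simp only [tgPDF_of_mem hx]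
  rw [hθ, integral_const_mul_gaussPDF_mul_log μ hν (tgRho_pos hν hA),
    tgPDF_of_mem ⟨hA.le, le_rfl⟩, tgPDF_of_mem ⟨le_rfl, hA.le⟩,
    ← log_mul_sqrt_two_pi_add_half hν]
  linear_combination (-(Real.log (tgRho μ ν A) - Real.log (ν * Real.sqrt (2 * Real.pi)) - 1 / 2))
    * tgRho_mul_integral_gaussPDF hν hA
end

section
/- Let K be a finite index set, w : K → ℝ with w_k ≥ 0 for all k, σ² > 0, and for disjoint subsets V, G ⊆ K define R(V,G) = (1/2)·log(1 + (Σ_{k∈V} w_k)/(σ² + Σ_{k∈G} w_k)). Then R is submodular in its first argument: for any subsets D₁, D₂ ⊆ K and G ⊆ K disjoint from D₁ ∪ D₂, R(D₁,G) + R(D₂,G) ≥ R(D₁ ∩ D₂, G) + R(D₁ ∪ D₂, G). -/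
open Finset

/-- Submodularity (in the first argument) of the Gaussian multiple-access
sum-rate function `R(V,G) = (1/2)·log(1 + Σ_{k∈V} w k / (σ² + Σ_{k∈G} w k))`:
for any `D₁, D₂ ⊆ K` and `G` disjoint from `D₁ ∪ D₂`,
`R(D₁,G) + R(D₂,G) ≥ R(D₁ ∩ D₂, G) + R(D₁ ∪ D₂, G)`. -/
theorem gaussian_rate_submodular {K : Type*} [Fintype K] [DecidableEq K]
    (w : K → ℝ) (hw : ∀ k, 0 ≤ w k) (σ2 : ℝ) (hσ2 : 0 < σ2)
    (R : Finset K → Finset K → ℝ)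
    (hR : ∀ V G : Finset K, Disjoint V G →
      R V G = (1 / 2) * Real.log (1 + (∑ k ∈ V, w k) / (σ2 + ∑ k ∈ G, w k)))
    (D₁ D₂ G : Finset K) (hG : Disjoint (D₁ ∪ D₂) G) :
    R D₁ G + R D₂ G ≥ R (D₁ ∩ D₂) G + R (D₁ ∪ D₂) G := by
  have h1 : Disjoint D₁ G := (disjoint_union_left.mp hG).1
  have h2 : Disjoint D₂ G := (disjoint_union_left.mp hG).2
  have hi : Disjoint (D₁ ∩ D₂) G := h1.mono_left inter_subset_left
  set d : ℝ := σ2 + ∑ k ∈ G, w k with hd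
  have hdpos : 0 < d := by
    have : 0 ≤ ∑ k ∈ G, w k := Finset.sum_nonneg fun k _ => hw k
    linarith
  set a : ℝ := ∑ k ∈ D₁, w k
  set b : ℝ := ∑ k ∈ D₂, w k
  set m : ℝ := ∑ k ∈ D₁ ∩ D₂, w k
  set M : ℝ := ∑ k ∈ D₁ ∪ D₂, w k
  have hsum : M + m = a + b := Finset.sum_union_inter
  have hma : m ≤ a := Finset.sum_le_sum_of_subset_of_nonneg inter_subset_left
    (fun k _ _ => hw k)
  have hmb : m ≤ b := Finset.sum_le_sum_of_subset_of_nonneg inter_subset_right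
    (fun k _ _ => hw k)
  have hm0 : 0 ≤ m := Finset.sum_nonneg fun k _ => hw k
  have key : ∀ x : ℝ, 0 ≤ x → 1 + x / d = (d + x) / d := fun x _ => by
    field_simp
  rw [hR D₁ G h1, hR D₂ G h2, hR (D₁ ∩ D₂) G hi, hR (D₁ ∪ D₂) G hG,
    key a (hm0.trans hma), key b (hm0.trans hmb), key m hm0,
    key M (by linarith)]
  have hlog : ∀ x : ℝ, 0 ≤ x → Real.log ((d + x) / d) = Real.log (d + x) - Real.log d := by
    intro x hx
    rw [Real.log_div (by linarith) hdpos.ne']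
  rw [hlog a (hm0.trans hma), hlog b (hm0.trans hmb), hlog m hm0, hlog M (by linarith)]
  have hM0 : 0 ≤ M := by linarith
  have hmul : (d + m) * (d + M) ≤ (d + a) * (d + b) := by nlinarith [mul_nonneg (sub_nonneg.mpr hma) (sub_nonneg.mpr hmb)]
  have hlogmul : Real.log ((d + m) * (d + M)) ≤ Real.log ((d + a) * (d + b)) :=
    Real.log_le_log (by nlinarith) hmul
  rw [Real.log_mul (by linarith) (by linarith), Real.log_mul (by linarith) (by linarith)] at hlogmul
  linarith
end
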